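/- arXiv:1411.0111 — 3 statements merged into one kernel-verified Lean document; each statement's English description precedes it below -/
import Mathlib

section
/- Let x, v : ℝ → ℝ be differentiable and satisfy x'(t) = v(t), v'(t) = −(1/4)v(t) + x(t) − x(t)² − x(t)³ for all t ∈ [0, T). Then for every t ∈ [0, T) the point (x(t), v(t)) lies in the compact set {(y,w) ∈ ℝ² : E(y,w) ≤ E(x(0), v(0))}; in particular every forward solution of the unforced oscillator remains in a compact set determined by its initial energy. -/
/-- The energy of the unforced oscillator. -/
noncomputable def E (x v : ℝ) : ℝ := v ^ 2 / 2 + (x ^ 4 / 4 + x ^ 3 / 3 - x ^ 2 / 2)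

lemma E_cont : Continuous fun p : ℝ × ℝ => E p.1 p.2 := by
  unfold E; fun_prop

lemma E_bound (y w M : ℝ) (h : E y w ≤ M) : |y| ≤ 8 * |M| + 33 ∧ |w| ≤ 8 * |M| + 33 := by
  unfold E at h
  have h1 : M ≤ |M| := le_abs_self M
  have h2 : y ^ 4 / 4 + y ^ 3 / 3 - y ^ 2 / 2 ≥ y ^ 4 / 8 - 4 := by
    nlinarith [sq_nonneg (y ^ 2 + 2 * y - 2), sq_nonneg (y + 3), sq_nonneg (y ^ 2 + 3 * y), sq_nonneg y, sq_nonneg (y + 2)]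
  constructor
  · rw [abs_le]
    constructor <;> nlinarith [sq_nonneg w, sq_nonneg (y ^ 2 - 8), sq_nonneg y, abs_nonneg M]
  · rw [abs_le]
    constructor <;> nlinarith [sq_nonneg (y ^ 2), sq_nonneg (w - 8), sq_nonneg (w + 8), abs_nonneg M]

/-- Every forward solution of the unforced oscillator on `[0, T)` stays in the
compact sublevel set of the energy determined by its initial condition. -/
theorem stmt_9 (T : ℝ) (x v : ℝ → ℝ)
    (hx : Differentiable ℝ x) (hv : Differentiable ℝ v)
    (hode : ∀ t ∈ Set.Ico (0 : ℝ) T, deriv x t = v t ∧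
      deriv v t = -(1/4 : ℝ) * v t + x t - (x t) ^ 2 - (x t) ^ 3) :
    IsCompact {p : ℝ × ℝ | E p.1 p.2 ≤ E (x 0) (v 0)} ∧
    ∀ t ∈ Set.Ico (0 : ℝ) T,
      (x t, v t) ∈ {p : ℝ × ℝ | E p.1 p.2 ≤ E (x 0) (v 0)} := by
  set M := E (x 0) (v 0) with hM
  have key : ∀ s ∈ Set.Ico (0:ℝ) T, HasDerivAt (fun u => E (x u) (v u)) (-(v s) ^ 2 / 4) s := by
    intro s hs
    obtain ⟨h1, h2⟩ := hode s hs
    have hxs : HasDerivAt x (v s) s := h1 ▸ (hx s).hasDerivAt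
    have hvs : HasDerivAt v (-(1/4 : ℝ) * v s + x s - (x s) ^ 2 - (x s) ^ 3) s :=
      h2 ▸ (hv s).hasDerivAt
    have : HasDerivAt (fun u => E (x u) (v u))
        (((2:ℕ) * v s ^ 1 * (-(1/4 : ℝ) * v s + x s - (x s) ^ 2 - (x s) ^ 3)) / 2 +
          (((4:ℕ) * x s ^ 3 * v s) / 4 + ((3:ℕ) * x s ^ 2 * v s) / 3 -
            ((2:ℕ) * x s ^ 1 * v s) / 2)) s := by
      unfold E
      exact ((hvs.pow 2).div_const 2).add
        ((((hxs.pow 4).div_const 4).add ((hxs.pow 3).div_const 3)).sub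
          ((hxs.pow 2).div_const 2))
    convert this using 1
    push_cast
    ring
  constructor
  · apply Metric.isCompact_of_isClosed_isBounded
    · exact isClosed_le (E_cont) continuous_const
    · rw [isBounded_iff_forall_norm_le]
      refine ⟨8 * |M| + 33, fun p hp => ?_⟩
      obtain ⟨h1, h2⟩ := E_bound p.1 p.2 M hp
      rw [Prod.norm_def]
      exact max_le h1 h2
  · intro t ht
    obtain ⟨ht0, htT⟩ := ht
    have mono : AntitoneOn (fun u => E (x u) (v u)) (Set.Icc 0 t) := by
      have hF : Differentiable ℝ (fun u => E (x u) (v u)) := by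
        unfold E; fun_prop
      apply antitoneOn_of_deriv_nonpos (convex_Icc 0 t) hF.continuous.continuousOn
        hF.differentiableOn
      · intro s hs
        rw [interior_Icc] at hs
        have hs' : s ∈ Set.Ico 0 T := ⟨hs.1.le, hs.2.trans htT⟩
        rw [(key s hs').deriv]
        have : (0:ℝ) ≤ (v s) ^ 2 := sq_nonneg _
        linarith
    exact mono ⟨le_refl 0, ht0⟩ ⟨ht0, le_refl t⟩ ht0
end

section
/- The equilibrium ((−1−√5)/2, 0) of the unforced oscillator is Lyapunov stable: for every ε > 0 there exists δ > 0 such that for all differentiable x, v : ℝ → ℝ satisfying x'(t) = v(t), v'(t) = −(1/4)v(t) + x(t) − x(t)² − x(t)³ for all t ≥ 0, if ‖(x(0), v(0)) − (x₃, 0)‖ < δ then ‖(x(t), v(t)) − (x₃, 0)‖ < ε for all t ≥ 0, where x₃ = (−1−√5)/2. -/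
noncomputable def Vpot (x : ℝ) : ℝ := x^4/4 + x^3/3 - x^2/2

lemma vlow (s u : ℝ) (h5 : s^2 = 5) (h1 : 11/5 ≤ s) (h2 : s ≤ 9/4) (hu : |u| ≤ 1/2) :
    u^2/2 ≤ Vpot ((-1-s)/2 + u) - Vpot ((-1-s)/2) := by
  obtain ⟨hl, hr⟩ := abs_le.mp hu
  unfold Vpot
  nlinarith [sq_nonneg u, sq_nonneg (u*u), sq_nonneg (u - 1/2), sq_nonneg (u + 1/2),
    mul_nonneg (mul_nonneg (sub_nonneg.mpr hr) (sub_nonneg.mpr hr)) (sub_nonneg.mpr hr),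
    sq_nonneg (u*(u-1/2)), sq_nonneg (u*(u+1/2))]

lemma vhigh (s u : ℝ) (h5 : s^2 = 5) (h1 : 11/5 ≤ s) (h2 : s ≤ 9/4) (hu : |u| ≤ 1/2) :
    Vpot ((-1-s)/2 + u) - Vpot ((-1-s)/2) ≤ 3 * u^2 := by
  obtain ⟨hl, hr⟩ := abs_le.mp hu
  unfold Vpot
  nlinarith [sq_nonneg u, sq_nonneg (u*u), sq_nonneg (u - 1/2), sq_nonneg (u + 1/2),
    sq_nonneg (u*(u-1/2)), sq_nonneg (u*(u+1/2))]

lemma energy_anti (x v : ℝ → ℝ) (hx : Differentiable ℝ x) (hv : Differentiable ℝ v)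
    (hode : ∀ t ≥ (0:ℝ), deriv x t = v t ∧
      deriv v t = -(1/4 : ℝ) * v t + x t - (x t) ^ 2 - (x t) ^ 3) :
    AntitoneOn (fun t => (v t)^2/2 + Vpot (x t)) (Set.Ici (0:ℝ)) := by
  have hE : Differentiable ℝ (fun t => (v t)^2/2 + Vpot (x t)) := by
    unfold Vpot; fun_prop
  have hDeriv : ∀ t : ℝ, HasDerivAt (fun t => (v t)^2/2 + Vpot (x t))
      (v t * deriv v t + ((x t)^3 + (x t)^2 - x t) * deriv x t) t := by
    intro t
    have Hx : HasDerivAt x (deriv x t) t := (hx t).hasDerivAt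
    have Hv : HasDerivAt v (deriv v t) t := (hv t).hasDerivAt
    have h1 : HasDerivAt (fun t => (v t)^2/2 + Vpot (x t))
        ((2 * v t ^ 1 * deriv v t)/2 + ((4 * x t ^ 3 * deriv x t)/4
          + (3 * x t ^ 2 * deriv x t)/3 - (2 * x t ^ 1 * deriv x t)/2)) t :=
      ((Hv.pow 2).div_const 2).add (((Hx.pow 4).div_const 4).add
        ((Hx.pow 3).div_const 3) |>.sub ((Hx.pow 2).div_const 2))
    convert h1 using 1; ring
  apply antitoneOn_of_deriv_nonpos (convex_Ici 0) hE.continuous.continuousOn hE.differentiableOn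
  intro t ht
  rw [interior_Ici] at ht
  obtain ⟨h1, h2⟩ := hode t ht.le
  rw [(hDeriv t).deriv, h1, h2]
  nlinarith [sq_nonneg (v t)]

/-- Lyapunov stability of the equilibrium `((-1-√5)/2, 0)` of the unforced
oscillator `ẋ = v, v̇ = -(1/4)v + x - x² - x³`. -/
theorem stmt_14 :
    let x₃ : ℝ := (-1 - Real.sqrt 5) / 2
    ∀ ε > 0, ∃ δ > 0, ∀ x v : ℝ → ℝ,
      Differentiable ℝ x → Differentiable ℝ v →
      (∀ t ≥ (0 : ℝ), deriv x t = v t ∧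
        deriv v t = -(1/4 : ℝ) * v t + x t - (x t) ^ 2 - (x t) ^ 3) →
      ‖((x 0, v 0) : ℝ × ℝ) - (x₃, 0)‖ < δ →
      ∀ t ≥ (0 : ℝ), ‖((x t, v t) : ℝ × ℝ) - (x₃, 0)‖ < ε := by
  intro x₃
  have hX : x₃ = (-1 - Real.sqrt 5) / 2 := rfl
  clear_value x₃
  intro ε hε
  set s : ℝ := Real.sqrt 5 with hs
  have hs5 : s^2 = 5 := Real.sq_sqrt (by norm_num)
  have hs0 : 0 ≤ s := Real.sqrt_nonneg 5
  have hsl : 11/5 ≤ s := by nlinarith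
  have hsr : s ≤ 9/4 := by nlinarith
  set r : ℝ := min ε (1/2) with hrdef
  have hr0 : 0 < r := lt_min hε (by norm_num)
  have hr2 : r ≤ 1/2 := min_le_right _ _
  refine ⟨r/3, by positivity, ?_⟩
  intro x v hx hv hode h0 t ht
  have hnorm : ∀ τ : ℝ, ‖((x τ, v τ) : ℝ × ℝ) - (x₃, 0)‖ = max |x τ - x₃| |v τ| := by
    intro τ
    rw [Prod.mk_sub_mk, Prod.norm_def]
    simp [Real.norm_eq_abs]
  have hanti := energy_anti x v hx hv hode
  have hx0 : |x 0 - x₃| < r/3 := lt_of_le_of_lt (by rw [hnorm 0]; exact le_max_left _ _) h0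
  have hv0 : |v 0| < r/3 := lt_of_le_of_lt (by rw [hnorm 0]; exact le_max_right _ _) h0
  have hE0 : (v 0)^2/2 + Vpot (x 0) - Vpot x₃ < r^2/2 := by
    have hu : |x 0 - x₃| ≤ 1/2 := hx0.le.trans (by linarith)
    have hH := vhigh s (x 0 - x₃) hs5 hsl hsr hu
    have hxe : (-1-s)/2 + (x 0 - x₃) = x 0 := by rw [hX]; ring
    have hx3 : ((-1:ℝ)-s)/2 = x₃ := by rw [hX]
    rw [hxe, hx3] at hH
    have h1 : (x 0 - x₃)^2 < (r/3)^2 := by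
      nlinarith [abs_nonneg (x 0 - x₃), sq_abs (x 0 - x₃)]
    have h2 : (v 0)^2 < (r/3)^2 := by
      nlinarith [abs_nonneg (v 0), sq_abs (v 0)]
    nlinarith [hr0]
  have key : ‖((x t, v t) : ℝ × ℝ) - (x₃, 0)‖ < r := by
    by_contra hge
    push_neg at hge
    have hg0 : ‖((x 0, v 0) : ℝ × ℝ) - (x₃, 0)‖ < r := h0.trans_le (by linarith)
    have hcont : ContinuousOn (fun τ => ‖((x τ, v τ) : ℝ × ℝ) - (x₃, 0)‖) (Set.Icc 0 t) :=
      (((hx.continuous.prodMk hv.continuous).sub continuous_const).norm).continuousOn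
    obtain ⟨τ, hτmem, hτ⟩ := intermediate_value_Icc ht hcont ⟨hg0.le, hge⟩
    have hmax : max |x τ - x₃| |v τ| = r := by rw [← hnorm τ]; exact hτ
    have hux : |x τ - x₃| ≤ r := by rw [← hmax]; exact le_max_left _ _
    have huv : |v τ| ≤ r := by rw [← hmax]; exact le_max_right _ _
    have hlow : r^2/2 ≤ (v τ)^2/2 + Vpot (x τ) - Vpot x₃ := by
      have hu12 : |x τ - x₃| ≤ 1/2 := hux.trans hr2
      have hL := vlow s (x τ - x₃) hs5 hsl hsr hu12
      have hxe : (-1-s)/2 + (x τ - x₃) = x τ := by rw [hX]; ring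
      have hx3 : ((-1:ℝ)-s)/2 = x₃ := by rw [hX]
      rw [hxe, hx3] at hL
      rcases max_choice |x τ - x₃| |v τ| with hc | hc <;> rw [hc] at hmax
      · have he : (x τ - x₃)^2 = r^2 := by rw [← sq_abs, hmax]
        linarith [sq_nonneg (v τ)]
      · have he : (v τ)^2 = r^2 := by rw [← sq_abs, hmax]
        linarith [sq_nonneg (x τ - x₃)]
    have hmono := hanti (Set.mem_Ici.mpr le_rfl) (Set.mem_Ici.mpr hτmem.1) hτmem.1
    simp only at hmono
    linarith
  calc ‖((x t, v t) : ℝ × ℝ) - (x₃, 0)‖ < r := key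
    _ ≤ ε := min_le_left _ _
end

section
/- The equilibrium ((−1+√5)/2, 0) of the unforced oscillator is Lyapunov stable: for every ε > 0 there exists δ > 0 such that for all differentiable x, v : ℝ → ℝ satisfying x'(t) = v(t), v'(t) = −(1/4)v(t) + x(t) − x(t)² − x(t)³ for all t ≥ 0, if ‖(x(0), v(0)) − (x₂, 0)‖ < δ then ‖(x(t), v(t)) − (x₂, 0)‖ < ε for all t ≥ 0, where x₂ = (−1+√5)/2. -/
/-!
The energy `E(x, v) = v²/2 + V(x)` decreases along solutions, at rate `c v²`. Near the
equilibrium `p = (x₂, 0)`, `E - E(p)` is squeezed between `‖q - p‖² / 5` and `5/2 ‖q - p‖²`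
(sup norm), so a trajectory starting within `r/4` of `p` has energy below the minimum of `E`
on the sphere of radius `r`; by continuity it can never reach that sphere.
-/

open Set

theorem dist_lt_of_antitoneOn {X : Type*} [PseudoMetricSpace X] {γ : ℝ → X} {L : X → ℝ}
    {p : X} {r : ℝ} (hγ : ContinuousOn γ (Ici 0)) (hL : AntitoneOn (L ∘ γ) (Ici 0))
    (hsphere : ∀ y, dist y p = r → L (γ 0) < L y) (h0 : dist (γ 0) p < r) :
    ∀ t ≥ 0, dist (γ t) p < r := by
  intro t ht
  by_contra! hrt
  have hγt : ContinuousOn γ (Icc 0 t) := hγ.mono Icc_subset_Ici_self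
  have hcont : ContinuousOn (fun s => dist (γ s) p) (Icc 0 t) :=
    (continuous_id.dist continuous_const).comp_continuousOn hγt
  obtain ⟨s, ⟨hs0, -⟩, hs⟩ := intermediate_value_Icc ht hcont ⟨h0.le, hrt⟩
  exact (hsphere (γ s) hs).not_ge (hL self_mem_Ici hs0 hs0)

theorem norm_sq_le_norm_fst_sq_add_norm_snd_sq {E F : Type*} [SeminormedAddCommGroup E]
    [SeminormedAddCommGroup F] (w : E × F) : ‖w‖ ^ 2 ≤ ‖w.1‖ ^ 2 + ‖w.2‖ ^ 2 := by
  rw [Prod.norm_def]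
  rcases max_cases ‖w.1‖ ‖w.2‖ with ⟨h, -⟩ | ⟨h, -⟩ <;> rw [h] <;>
    linarith [sq_nonneg ‖w.1‖, sq_nonneg ‖w.2‖]

noncomputable def oscPotential (x : ℝ) : ℝ := x ^ 4 / 4 + x ^ 3 / 3 - x ^ 2 / 2

noncomputable def oscEnergy (q : ℝ × ℝ) : ℝ := q.2 ^ 2 / 2 + oscPotential q.1

theorem hasDerivAt_oscEnergy {c t : ℝ} {x v : ℝ → ℝ} (hx : HasDerivAt x (v t) t)
    (hv : HasDerivAt v (-c * v t + x t - x t ^ 2 - x t ^ 3) t) :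
    HasDerivAt (fun s => oscEnergy (x s, v s)) (-c * v t ^ 2) t := by
  have h := ((hv.pow 2).div_const 2).add
    ((((hx.pow 4).div_const 4).add ((hx.pow 3).div_const 3)).sub ((hx.pow 2).div_const 2))
  exact h.congr_deriv (by ring)

theorem antitoneOn_oscEnergy {c : ℝ} (hc : 0 ≤ c) {x v : ℝ → ℝ} (hx : Differentiable ℝ x)
    (hv : Differentiable ℝ v)
    (hode : ∀ t ≥ (0 : ℝ), deriv x t = v t ∧
      deriv v t = -c * v t + x t - x t ^ 2 - x t ^ 3) :
    AntitoneOn (oscEnergy ∘ fun t => (x t, v t)) (Ici 0) := by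
  have hE : ∀ t ≥ (0 : ℝ), HasDerivAt (oscEnergy ∘ fun s => (x s, v s)) (-c * v t ^ 2) t :=
    fun t ht => hasDerivAt_oscEnergy ((hode t ht).1 ▸ (hx t).hasDerivAt)
      ((hode t ht).2 ▸ (hv t).hasDerivAt)
  refine antitoneOn_of_hasDerivWithinAt_nonpos (convex_Ici 0) ?_
    (fun t ht => (hE t (interior_subset ht)).hasDerivWithinAt)
    (fun t _ => by nlinarith [sq_nonneg (v t)])
  exact HasDerivAt.continuousOn fun t ht => hE t ht

section Equilibrium

variable {x₂ : ℝ} (hx₂ : x₂ ^ 2 + x₂ = 1) (hpos : 0 ≤ x₂)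
include hx₂

theorem oscPotential_add_sub (u : ℝ) :
    oscPotential (x₂ + u) - oscPotential x₂
      = (2 - x₂) / 2 * u ^ 2 + (x₂ + 1 / 3) * u ^ 3 + u ^ 4 / 4 := by
  unfold oscPotential
  linear_combination (u * (2 * x₂ + 3 * u) / 2) * hx₂

include hpos

theorem sq_div_five_le_oscPotential_add_sub {u : ℝ} (hu : |u| ≤ 1 / 2) :
    u ^ 2 / 5 ≤ oscPotential (x₂ + u) - oscPotential x₂ := by
  obtain ⟨hu₁, hu₂⟩ := abs_le.mp hu
  have hle : x₂ ≤ 5 / 8 := by nlinarith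
  have hcubic : 0 ≤ (x₂ + 1 / 3) * ((1 / 2 + u) * u ^ 2) :=
    mul_nonneg (by linarith) (mul_nonneg (by linarith) (sq_nonneg u))
  rw [oscPotential_add_sub hx₂]
  nlinarith [sq_nonneg u, sq_nonneg (u ^ 2), mul_nonneg (sub_nonneg.mpr hle) (sq_nonneg u)]

theorem oscPotential_add_sub_le {u : ℝ} (hu : |u| ≤ 1 / 2) :
    oscPotential (x₂ + u) - oscPotential x₂ ≤ 2 * u ^ 2 := by
  obtain ⟨hu₁, hu₂⟩ := abs_le.mp hu
  have hcubic : 0 ≤ (x₂ + 1 / 3) * ((1 / 2 - u) * u ^ 2) :=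
    mul_nonneg (by linarith) (mul_nonneg (by linarith) (sq_nonneg u))
  have hquartic : u ^ 2 * u ^ 2 ≤ 1 / 4 * u ^ 2 :=
    mul_le_mul_of_nonneg_right (by nlinarith) (sq_nonneg u)
  rw [oscPotential_add_sub hx₂]
  nlinarith [sq_nonneg u, mul_nonneg hpos (sq_nonneg u)]

theorem norm_sub_sq_div_five_le_oscEnergy_sub {q : ℝ × ℝ} (hq : ‖q - (x₂, 0)‖ ≤ 1 / 2) :
    ‖q - (x₂, 0)‖ ^ 2 / 5 ≤ oscEnergy q - oscEnergy (x₂, 0) := by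
  have hu : |q.1 - x₂| ≤ 1 / 2 := (norm_fst_le (q - (x₂, 0))).trans hq
  have hV := sq_div_five_le_oscPotential_add_sub hx₂ hpos hu
  rw [add_sub_cancel] at hV
  have hsq := norm_sq_le_norm_fst_sq_add_norm_snd_sq (q - (x₂, 0))
  simp only [oscEnergy, Prod.fst_sub, Prod.snd_sub, sub_zero, Real.norm_eq_abs, sq_abs] at hsq ⊢
  linarith [sq_nonneg q.2]

theorem oscEnergy_sub_le {q : ℝ × ℝ} (hq : ‖q - (x₂, 0)‖ ≤ 1 / 2) :
    oscEnergy q - oscEnergy (x₂, 0) ≤ 5 / 2 * ‖q - (x₂, 0)‖ ^ 2 := by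
  have hu : |q.1 - x₂| ≤ ‖q - (x₂, 0)‖ := norm_fst_le (q - (x₂, 0))
  have hb : |q.2| ≤ ‖q - (x₂, 0)‖ := by
    rw [Prod.norm_def]
    simp
  have hV := oscPotential_add_sub_le hx₂ hpos (hu.trans hq)
  rw [add_sub_cancel] at hV
  have hu2 := pow_le_pow_left₀ (abs_nonneg _) hu 2
  have hb2 := pow_le_pow_left₀ (abs_nonneg _) hb 2
  simp only [oscEnergy, sq_abs] at hu2 hb2 ⊢
  linarith

end Equilibrium

/-- Lyapunov stability of the equilibrium `((-1+√5)/2, 0)` of the unforced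
oscillator `ẋ = v, v̇ = -(1/4)v + x - x² - x³`. -/
theorem stmt_15 :
    let x₂ : ℝ := (-1 + Real.sqrt 5) / 2
    ∀ ε > 0, ∃ δ > 0, ∀ x v : ℝ → ℝ,
      Differentiable ℝ x → Differentiable ℝ v →
      (∀ t ≥ (0 : ℝ), deriv x t = v t ∧
        deriv v t = -(1/4 : ℝ) * v t + x t - (x t) ^ 2 - (x t) ^ 3) →
      ‖((x 0, v 0) : ℝ × ℝ) - (x₂, 0)‖ < δ →
      ∀ t ≥ (0 : ℝ), ‖((x t, v t) : ℝ × ℝ) - (x₂, 0)‖ < ε := by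
  intro x₂ ε hε
  have hsqrt : Real.sqrt 5 ^ 2 = 5 := Real.sq_sqrt (by norm_num)
  have hx₂ : x₂ ^ 2 + x₂ = 1 := by simp only [x₂]; linear_combination hsqrt / 4
  have hpos : 0 ≤ x₂ := by
    simp only [x₂]; nlinarith [Real.sqrt_nonneg 5]
  set r := min ε (1 / 2)
  have hr : 0 < r := lt_min hε (by norm_num)
  refine ⟨r / 4, by positivity, fun x v hx hv hode h0 t ht => ?_⟩
  have hsphere : ∀ q : ℝ × ℝ, dist q (x₂, 0) = r → oscEnergy (x 0, v 0) < oscEnergy q := by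
    intro q hq
    rw [dist_eq_norm] at hq
    have hr_le : r ≤ 1 / 2 := min_le_right _ _
    suffices oscEnergy (x 0, v 0) - oscEnergy (x₂, 0) < oscEnergy q - oscEnergy (x₂, 0) by
      linarith
    calc oscEnergy (x 0, v 0) - oscEnergy (x₂, 0)
        ≤ 5 / 2 * ‖(x 0, v 0) - (x₂, 0)‖ ^ 2 := oscEnergy_sub_le hx₂ hpos (by linarith)
      _ < 5 / 2 * (r / 4) ^ 2 := by gcongr
      _ < r ^ 2 / 5 := by nlinarith
      _ = ‖q - (x₂, 0)‖ ^ 2 / 5 := by rw [hq]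
      _ ≤ oscEnergy q - oscEnergy (x₂, 0) :=
        norm_sub_sq_div_five_le_oscEnergy_sub hx₂ hpos (by linarith)
  have htrap := dist_lt_of_antitoneOn (hx.continuous.prodMk hv.continuous).continuousOn
    (antitoneOn_oscEnergy (by norm_num) hx hv hode) hsphere (by rw [dist_eq_norm]; linarith) t ht
  rw [dist_eq_norm] at htrap
  exact htrap.trans_le (min_le_left _ _)
end
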